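/- arXiv:0807.0796 — 3 statements merged into one kernel-verified Lean document; each statement's English description precedes it below -/
import Mathlib

section
/- There exists a size pair (X, φ) and a homological 0-critical value w for (X, φ) such that w is not a discontinuity point for ℓ_{(X,φ)}(·, v) for any v > w, nor for ℓ_{(X,φ)}(u, ·) for any u < w. (For instance, X a vertical segment with infinitely many branches sprouting at heights 1 + 1/2^n, with φ the height function and w = 1.) -/
/-!
Take `X = [0, 2]` with `φ(t) = t` on `[0, 1]`, and on `[1, 2]` add to `t` a tent of height
`2¹⁻ᵏ` over each interval `[1 + 2⁻⁽ᵏ⁺¹⁾, 1 + 2⁻ᵏ]`. The endpoints `1 + 2⁻ᵏ` are local minima of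
`φ` accumulating at `w = 1`: for small `ε > 0` the sublevel set `{φ ≤ 1 - ε} = [0, 1 - ε]` is
connected, while in `{φ ≤ 1 + ε}` the tent next to a local minimum below level `1 + ε` is too high
to cross, so `w = 1` is a homological critical value. On the other hand the tents are so low that
`φ(t) ≤ max t (5t - 4)`, so every point of `{φ ≤ u}` is joined to `0` inside `{φ ≤ v}` as soon as
`max u (5u - 4) ≤ v`. Hence `ℓ(u, v) = 1` on a neighbourhood of `1` in either variable.
-/

/-- The size function of a size pair: `sizeFun φ u v` is the number of connected
components of the sublevel set `X_v = {φ ≤ v}` containing at least one point of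
`X_u = {φ ≤ u}`. -/
noncomputable def sizeFun {X : Type} [TopologicalSpace X] (φ : X → ℝ) (u v : ℝ) : ℕ :=
  Set.ncard {C : Set ↥{x : X | φ x ≤ v} |
    ∃ p : ↥{x : X | φ x ≤ v}, φ (p : X) ≤ u ∧ C = connectedComponent p}

open Set Topology Filter

section ComponentsOnTheLine

variable {T : Type*} [TopologicalSpace T] {g : T → ℝ} {p q : T}

theorem connectedComponent_eq_of_Icc_subset_range (hg : IsInducing g) (hpq : g p ≤ g q)
    (h : Icc (g p) (g q) ⊆ range g) : connectedComponent p = connectedComponent q := by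
  have hW : IsPreconnected (g ⁻¹' Icc (g p) (g q)) := by
    rw [← hg.isPreconnected_image, image_preimage_eq_of_subset h]
    exact isPreconnected_Icc
  exact connectedComponent_eq <|
    hW.subset_connectedComponent (left_mem_Icc.2 hpq) (right_mem_Icc.2 hpq)

theorem connectedComponent_ne_of_notMem_range (hg : Continuous g) {c : ℝ}
    (hpc : g p < c) (hcq : c < g q) (hc : c ∉ range g) :
    connectedComponent p ≠ connectedComponent q := by
  intro h
  have hI : IsPreconnected (g '' connectedComponent p) :=
    isPreconnected_connectedComponent.image g hg.continuousOn
  have hq : g q ∈ g '' connectedComponent p := mem_image_of_mem g (h ▸ mem_connectedComponent)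
  exact hc <| image_subset_range g _ <|
    hI.Icc_subset (mem_image_of_mem g mem_connectedComponent) hq ⟨hpc.le, hcq.le⟩

end ComponentsOnTheLine

section SizeFunction

variable {X : Type} [TopologicalSpace X] {φ : X → ℝ} {u v : ℝ}

theorem sizeFun_eq_zero (h : ∀ x, u < φ x) (v : ℝ) : sizeFun φ u v = 0 := by
  have hempty : {C : Set {x | φ x ≤ v} |
      ∃ p : {x | φ x ≤ v}, φ p ≤ u ∧ C = connectedComponent p} = ∅ :=
    eq_empty_iff_forall_notMem.2 fun _ ⟨p, hp, _⟩ => (h p).not_ge hp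
  rw [sizeFun, hempty, ncard_empty]

theorem sizeFun_eq_one (p₀ : {x | φ x ≤ v}) (h₀ : φ p₀ ≤ u)
    (h : ∀ p : {x | φ x ≤ v}, φ p ≤ u → connectedComponent p = connectedComponent p₀) :
    sizeFun φ u v = 1 := by
  rw [sizeFun, ncard_eq_one]
  refine ⟨connectedComponent p₀, Set.ext fun C => ⟨?_, ?_⟩⟩
  · rintro ⟨p, hp, rfl⟩
    exact h p hp
  · rintro rfl
    exact ⟨p₀, h₀, rfl⟩

end SizeFunction

namespace BranchedSegment

noncomputable def dip (k : ℕ) : ℝ := 1 + (1 / 2) ^ k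

noncomputable def peak (k : ℕ) : ℝ := 1 + 3 * (1 / 2) ^ (k + 2)

noncomputable def tent (k : ℕ) (t : ℝ) : ℝ := max 0 ((1 / 2) ^ (k + 2) - |t - peak k|)

noncomputable def height (t : ℝ) : ℝ := t + 8 * ∑' k, tent k t

theorem one_lt_dip (k : ℕ) : 1 < dip k :=
  lt_add_of_pos_right 1 (by positivity)

theorem dip_le_two (k : ℕ) : dip k ≤ 2 := by
  unfold dip; linarith [pow_le_one₀ (n := k) (by norm_num : (0 : ℝ) ≤ 1 / 2) (by norm_num)]

theorem dip_antitone : Antitone dip := fun _ _ h =>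
  add_le_add_right (pow_le_pow_of_le_one (by norm_num : (0 : ℝ) ≤ 1 / 2) (by norm_num) h) 1

theorem dip_succ_lt_peak (k : ℕ) : dip (k + 1) < peak k := by
  unfold dip peak; ring_nf; linarith [pow_pos (by norm_num : (0 : ℝ) < 1 / 2) k]

theorem peak_lt_dip (k : ℕ) : peak k < dip k := by
  unfold dip peak; ring_nf; linarith [pow_pos (by norm_num : (0 : ℝ) < 1 / 2) k]

theorem tent_nonneg (k : ℕ) (t : ℝ) : 0 ≤ tent k t := le_max_left _ _

theorem tent_le (k : ℕ) (t : ℝ) : tent k t ≤ (1 / 2) ^ (k + 2) :=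
  max_le (by positivity) (by linarith [abs_nonneg (t - peak k)])

theorem tent_eq_zero_of_notMem {k : ℕ} {t : ℝ} (h : t ∉ Ioo (dip (k + 1)) (dip k)) :
    tent k t = 0 := by
  have hleft : peak k - (1 / 2) ^ (k + 2) = dip (k + 1) := by unfold dip peak; ring
  have hright : peak k + (1 / 2) ^ (k + 2) = dip k := by unfold dip peak; ring
  have hr : (0 : ℝ) < (1 / 2) ^ (k + 2) := by positivity
  refine max_eq_left (sub_nonpos.2 ?_)
  rw [mem_Ioo, not_and_or, not_lt, not_lt] at h
  rcases h with h | h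
  · rw [abs_sub_comm, abs_of_nonneg (by linarith)]; linarith
  · rw [abs_of_nonneg (by linarith)]; linarith

theorem notMem_Ioo_dip_of_ne {j k : ℕ} {t : ℝ} (ht : t ∈ Ioo (dip (j + 1)) (dip j))
    (hkj : k ≠ j) : t ∉ Ioo (dip (k + 1)) (dip k) := by
  rintro ⟨hk₁, hk₂⟩
  rcases hkj.lt_or_gt with h | h
  · linarith [ht.2, dip_antitone (Nat.succ_le_of_lt h)]
  · linarith [ht.1, dip_antitone (Nat.succ_le_of_lt h)]

theorem tsum_tent_of_mem {j : ℕ} {t : ℝ} (ht : t ∈ Ioo (dip (j + 1)) (dip j)) :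
    ∑' k, tent k t = tent j t :=
  tsum_eq_single j fun _ hkj => tent_eq_zero_of_notMem (notMem_Ioo_dip_of_ne ht hkj)

theorem tsum_tent_of_forall_notMem {t : ℝ} (ht : ∀ k, t ∉ Ioo (dip (k + 1)) (dip k)) :
    ∑' k, tent k t = 0 := by
  simp [tent_eq_zero_of_notMem (ht _)]

theorem height_of_le_one {t : ℝ} (ht : t ≤ 1) : height t = t := by
  rw [height, tsum_tent_of_forall_notMem fun k h => by linarith [h.1, one_lt_dip (k + 1)]]
  ring

theorem height_dip (j : ℕ) : height (dip j) = dip j := by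
  rw [height, tsum_tent_of_forall_notMem fun k h => ?_, mul_zero, add_zero]
  rcases lt_trichotomy k j with hkj | rfl | hjk
  · linarith [h.1, dip_antitone (Nat.succ_le_of_lt hkj)]
  · exact h.2.false
  · linarith [h.2, dip_antitone hjk.le]

theorem height_peak (k : ℕ) : height (peak k) = peak k + 2 * (1 / 2) ^ k := by
  rw [height, tsum_tent_of_mem ⟨dip_succ_lt_peak k, peak_lt_dip k⟩, tent, sub_self, abs_zero,
    sub_zero, max_eq_right (by positivity)]
  ring

theorem le_height (t : ℝ) : t ≤ height t := by
  have : 0 ≤ ∑' k, tent k t := tsum_nonneg fun k => tent_nonneg k t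
  unfold height; linarith

theorem height_le (t : ℝ) : height t ≤ max t (5 * t - 4) := by
  by_cases ht : ∃ j, t ∈ Ioo (dip (j + 1)) (dip j)
  · obtain ⟨j, hj⟩ := ht
    have hdip : dip (j + 1) - 1 = 2 * (1 / 2) ^ (j + 2) := by unfold dip; ring
    rw [height, tsum_tent_of_mem hj]
    linarith [tent_le j t, le_max_right t (5 * t - 4), hj.1]
  · push Not at ht
    rw [height, tsum_tent_of_forall_notMem ht]
    linarith [le_max_left t (5 * t - 4)]

theorem continuous_height : Continuous height := by
  refine continuous_id.add (continuous_const.mul ?_)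
  refine continuous_tsum (fun k => by unfold tent; fun_prop)
    ((summable_nat_add_iff 2).2 summable_geometric_two) fun k t => ?_
  rw [Real.norm_eq_abs, abs_of_nonneg (tent_nonneg k t)]
  exact tent_le k t

section Sublevel

variable {u v : ℝ}

def origin (hv : 0 ≤ v) : {x : Icc (0 : ℝ) 2 | height x ≤ v} :=
  ⟨⟨0, left_mem_Icc.2 zero_le_two⟩, show height 0 ≤ v by rwa [height_of_le_one zero_le_one]⟩

theorem connectedComponent_sublevel_eq {p q : {x : Icc (0 : ℝ) 2 | height x ≤ v}}
    (hpq : p.1.1 ≤ q.1.1) (h : ∀ s ∈ Icc p.1.1 q.1.1, height s ≤ v) :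
    connectedComponent p = connectedComponent q :=
  connectedComponent_eq_of_Icc_subset_range (IsInducing.subtypeVal.comp IsInducing.subtypeVal)
    hpq fun s hs => ⟨⟨⟨s, p.1.2.1.trans hs.1, hs.2.trans q.1.2.2⟩, h s hs⟩, rfl⟩

theorem connectedComponent_sublevel_ne {p q : {x : Icc (0 : ℝ) 2 | height x ≤ v}} {c : ℝ}
    (hpc : p.1.1 < c) (hcq : c < q.1.1) (hc : v < height c) :
    connectedComponent p ≠ connectedComponent q :=
  connectedComponent_ne_of_notMem_range (continuous_subtype_val.comp continuous_subtype_val)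
    hpc hcq fun ⟨x, hx⟩ => (hx ▸ x.2 : height c ≤ v).not_gt hc

theorem connectedComponent_eq_origin (hv : 0 ≤ v) (huv : max u (5 * u - 4) ≤ v)
    (p : {x : Icc (0 : ℝ) 2 | height x ≤ v}) (hp : height p.1.1 ≤ u) :
    connectedComponent p = connectedComponent (origin hv) := by
  refine (connectedComponent_sublevel_eq p.1.2.1 fun s hs => ?_).symm
  have hsu : s ≤ u := hs.2.trans ((le_height _).trans hp)
  calc height s ≤ max s (5 * s - 4) := height_le s
    _ ≤ max u (5 * u - 4) := by gcongr
    _ ≤ v := huv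

theorem card_connectedComponents_sublevel_of_lt_one (hv : 0 ≤ v) (hv1 : v < 1) :
    Nat.card (ConnectedComponents {x : Icc (0 : ℝ) 2 | height x ≤ v}) = 1 := by
  have huv : max v (5 * v - 4) ≤ v := max_le le_rfl (by linarith)
  refine Nat.card_eq_one_iff_unique.2 ⟨⟨?_⟩, ⟨ConnectedComponents.mk (origin hv)⟩⟩
  refine ConnectedComponents.surjective_coe.forall₂.2 fun p q => ?_
  rw [ConnectedComponents.coe_eq_coe, connectedComponent_eq_origin hv huv p p.2,
    connectedComponent_eq_origin hv huv q q.2]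

theorem card_connectedComponents_sublevel_ne_one {ε : ℝ} (hε : 0 < ε) (hε1 : ε < 1) :
    Nat.card (ConnectedComponents {x : Icc (0 : ℝ) 2 | height x ≤ 1 + ε}) ≠ 1 := by
  obtain ⟨n, hε_gt, hε_le⟩ :=
    exists_nat_pow_near_of_lt_one hε hε1.le (by norm_num : (0 : ℝ) < 1 / 2) (by norm_num)
  have hq : height (dip (n + 1)) ≤ 1 + ε := by
    rw [height_dip, dip]
    linarith
  let q : {x : Icc (0 : ℝ) 2 | height x ≤ 1 + ε} :=
    ⟨⟨dip (n + 1), zero_le_one.trans (one_lt_dip _).le, dip_le_two _⟩, hq⟩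
  have hpeak : 1 + ε < height (peak (n + 1)) := by
    rw [height_peak, peak]
    linarith [pow_succ (1 / 2 : ℝ) n, pow_pos (by norm_num : (0 : ℝ) < 1 / 2) (n + 3)]
  have hne : connectedComponent (origin (by linarith)) ≠ connectedComponent q :=
    connectedComponent_sublevel_ne (zero_lt_one.trans ((one_lt_dip _).trans (dip_succ_lt_peak _)))
      (peak_lt_dip _) hpeak
  rintro hcard
  exact hne (ConnectedComponents.coe_eq_coe.1 ((Nat.card_eq_one_iff_unique.1 hcard).1.elim _ _))

theorem sizeFun_height_eq_one (hu : 0 ≤ u) (huv : max u (5 * u - 4) ≤ v) :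
    sizeFun (fun x : Icc (0 : ℝ) 2 => height x) u v = 1 :=
  have hv : 0 ≤ v := hu.trans ((le_max_left _ _).trans huv)
  sizeFun_eq_one (origin hv) (by simpa [origin, height_of_le_one zero_le_one] using hu)
    (connectedComponent_eq_origin hv huv)

end Sublevel

end BranchedSegment

open BranchedSegment in
/-- Remark 3.11: there exists a size pair `(X, φ)` and a real `w` which
is a homological 0-critical value (witnessed by the fact that the number of connected
components of `X_{w-ε}` differs from that of `X_{w+ε}` for all sufficiently small
`ε > 0`), and yet `w` is not a discontinuity point of `ℓ(·,v)` for any `v > w`, nor of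
`ℓ(u,·)` for any `u < w`. -/
theorem exists_critical_value_not_discontinuity :
    ∃ (X : Type) (_ : TopologicalSpace X) (_ : CompactSpace X) (_ : T2Space X)
      (_ : LocallyConnectedSpace X) (_ : Nonempty X) (φ : X → ℝ) (_ : Continuous φ)
      (w : ℝ),
      (∃ ε₀ > (0 : ℝ), ∀ ε : ℝ, 0 < ε → ε < ε₀ →
        Nat.card (ConnectedComponents ↥{x : X | φ x ≤ w - ε}) ≠
          Nat.card (ConnectedComponents ↥{x : X | φ x ≤ w + ε})) ∧
      (∀ v > w, ContinuousAt (fun u : ℝ => (sizeFun φ u v : ℝ)) w) ∧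
      (∀ u < w, ContinuousAt (fun v : ℝ => (sizeFun φ u v : ℝ)) w) := by
  have := (convex_Icc (0 : ℝ) 2).locallyPathConnectedSpace
  refine ⟨Icc (0 : ℝ) 2, inferInstance, inferInstance, inferInstance, inferInstance,
    (nonempty_Icc.2 zero_le_two).to_subtype,
    fun x => height x, continuous_height.comp continuous_subtype_val, 1,
    ⟨1, one_pos, fun ε hε hε1 => ?_⟩, fun v hv => ?_, fun u hu => ?_⟩
  · rw [card_connectedComponents_sublevel_of_lt_one (by linarith) (by linarith)]
    exact (card_connectedComponents_sublevel_ne_one hε hε1).symm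
  · refine EventuallyEq.continuousAt (y := 1) ?_
    filter_upwards [Ioo_mem_nhds zero_lt_one (by linarith : 1 < 1 + (v - 1) / 5)] with u hu
    rw [sizeFun_height_eq_one hu.1.le (max_le (by linarith [hu.2]) (by linarith [hu.2]))]
    norm_num
  · rcases lt_or_ge u 0 with hu0 | hu0
    · simp only [sizeFun_eq_zero fun x : Icc (0 : ℝ) 2 => hu0.trans_le (x.2.1.trans (le_height x))]
      exact continuousAt_const
    · refine EventuallyEq.continuousAt (y := 1) ?_
      filter_upwards [Ioi_mem_nhds hu] with v hv
      rw [sizeFun_height_eq_one hu0 (max_le (le_of_lt hv) (by linarith [mem_Ioi.1 hv]))]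
      norm_num
end

section
/- In the setting X = A ∪ B with the standing hypotheses, let f_0 : Ȟ_0((A∩B)_u) → Ȟ_0((A∩B)_v) be induced by inclusion (u < v). If f_0 is surjective, then the relative Mayer–Vietoris map α_{v,u} : Ȟ_0((A∩B)_v, (A∩B)_u) → Ȟ_0(A_v, A_u) ⊕ Ȟ_0(B_v, B_u) is the zero map, and moreover im α = ker β for the restricted Mayer–Vietoris maps α = α_v|_{im f_0} and β = β_v|_{im g_0}. -/
universe u v

/-- An abstract packaging of (degree-0) Čech homology with coefficients in a field `K`,
applied to the subspaces of a topological space `X`: absolute groups `Ȟ₀(S)`, relative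
groups `Ȟ₀(T, S)`, inclusion-induced homomorphisms, together with the standard
properties of Čech homology on compact Hausdorff pairs with field coefficients
(rank `Ȟ₀` = number of connected components, functoriality, exactness of the final part
of the homology sequence of a pair, and exactness of the final part of the absolute and
relative Mayer–Vietoris sequences of compact triads). -/
structure CechTheory (X : Type u) [TopologicalSpace X] (K : Type v) [Field K] where
  /-- the 0-th Čech homology group of a subspace -/
  H0 : Set X → Type v
  [h0Add : ∀ S : Set X, AddCommGroup (H0 S)]
  [h0Mod : ∀ S : Set X, Module K (H0 S)]
  /-- the relative 0-th Čech homology group `Ȟ₀(T, S)` -/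
  H0rel : Set X → Set X → Type v
  [h0relAdd : ∀ T S : Set X, AddCommGroup (H0rel T S)]
  [h0relMod : ∀ T S : Set X, Module K (H0rel T S)]
  /-- the homomorphism induced by an inclusion of subspaces -/
  map : ∀ {S T : Set X}, S ⊆ T → (H0 S →ₗ[K] H0 T)
  /-- the homomorphism induced by an inclusion of pairs -/
  maprel : ∀ {T S T' S' : Set X}, T ⊆ T' → S ⊆ S' → (H0rel T S →ₗ[K] H0rel T' S')
  /-- the natural map `Ȟ₀(T) → Ȟ₀(T, S)` -/
  quot : ∀ T S : Set X, H0 T →ₗ[K] H0rel T S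
  map_comp : ∀ {S T U : Set X} (h₁ : S ⊆ T) (h₂ : T ⊆ U),
    (map h₂).comp (map h₁) = map (h₁.trans h₂)
  /-- the homology class of a point -/
  cls : ∀ S : Set X, S → H0 S
  map_cls : ∀ {S T : Set X} (h : S ⊆ T) (x : S), map h (cls S x) = cls T ⟨x.1, h x.2⟩
  cls_eq_iff : ∀ S : Set X, IsCompact S → ∀ x y : S,
    (cls S x = cls S y ↔ connectedComponent x = connectedComponent y)
  cls_span : ∀ S : Set X, IsCompact S →
    Submodule.span K (Set.range (cls S)) = ⊤
  cls_indep : ∀ S : Set X, IsCompact S → ∀ f : ConnectedComponents ↥S → ↥S,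
    (∀ c, ConnectedComponents.mk (f c) = c) →
    LinearIndependent K fun c => cls S (f c)
  quot_surjective : ∀ T S : Set X, S ⊆ T → Function.Surjective (quot T S)
  exact_pair : ∀ {S T : Set X} (h : S ⊆ T),
    LinearMap.range (map h) = LinearMap.ker (quot T S)
  /-- exactness of the Mayer–Vietoris sequence of a compact triad at `Ȟ₀(A) ⊕ Ȟ₀(B)` -/
  mv_exact : ∀ A B : Set X, IsCompact A → IsCompact B →
    LinearMap.range ((map (show A ∩ B ⊆ A from Set.inter_subset_left)).prod
        (map (show A ∩ B ⊆ B from Set.inter_subset_right))) =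
      LinearMap.ker ((map (show A ⊆ A ∪ B from Set.subset_union_left)).comp
          (LinearMap.fst K (H0 A) (H0 B)) -
        (map (show B ⊆ A ∪ B from Set.subset_union_right)).comp
          (LinearMap.snd K (H0 A) (H0 B)))
  /-- surjectivity of `β : Ȟ₀(A) ⊕ Ȟ₀(B) → Ȟ₀(A ∪ B)` -/
  mv_beta_surjective : ∀ A B : Set X, IsCompact A → IsCompact B →
    Function.Surjective ((map (show A ⊆ A ∪ B from Set.subset_union_left)).comp
        (LinearMap.fst K (H0 A) (H0 B)) -
      (map (show B ⊆ A ∪ B from Set.subset_union_right)).comp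
        (LinearMap.snd K (H0 A) (H0 B)))
  /-- exactness of the relative Mayer–Vietoris sequence at `Ȟ₀(A,A') ⊕ Ȟ₀(B,B')` -/
  mvrel_exact : ∀ A B A' B' : Set X, IsCompact A → IsCompact B → A' ⊆ A → B' ⊆ B →
    LinearMap.range ((maprel (show A ∩ B ⊆ A from Set.inter_subset_left)
          (show A' ∩ B' ⊆ A' from Set.inter_subset_left)).prod
        (maprel (show A ∩ B ⊆ B from Set.inter_subset_right)
          (show A' ∩ B' ⊆ B' from Set.inter_subset_right))) =
      LinearMap.ker ((maprel (show A ⊆ A ∪ B from Set.subset_union_left)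
            (show A' ⊆ A' ∪ B' from Set.subset_union_left)).comp
          (LinearMap.fst K (H0rel A A') (H0rel B B')) -
        (maprel (show B ⊆ A ∪ B from Set.subset_union_right)
            (show B' ⊆ A' ∪ B' from Set.subset_union_right)).comp
          (LinearMap.snd K (H0rel A A') (H0rel B B')))
  /-- surjectivity of the relative `β` -/
  mvrel_beta_surjective : ∀ A B A' B' : Set X, IsCompact A → IsCompact B →
    A' ⊆ A → B' ⊆ B →
    Function.Surjective ((maprel (show A ⊆ A ∪ B from Set.subset_union_left)
          (show A' ⊆ A' ∪ B' from Set.subset_union_left)).comp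
        (LinearMap.fst K (H0rel A A') (H0rel B B')) -
      (maprel (show B ⊆ A ∪ B from Set.subset_union_right)
          (show B' ⊆ A' ∪ B' from Set.subset_union_right)).comp
        (LinearMap.snd K (H0rel A A') (H0rel B B')))

attribute [instance] CechTheory.h0Add CechTheory.h0Mod CechTheory.h0relAdd
  CechTheory.h0relMod

/-- The relative size function: `sizeFunOn S φ u v` is the number of connected components
of the sublevel set `S_v = S ∩ {φ ≤ v}` containing at least one point of
`S_u = S ∩ {φ ≤ u}`. -/
noncomputable def sizeFunOn {X : Type u} [TopologicalSpace X] (S : Set X) (φ : X → ℝ)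
    (u v : ℝ) : ℕ :=
  Set.ncard {C : Set ↥(S ∩ {x : X | φ x ≤ v}) |
    ∃ p : ↥(S ∩ {x : X | φ x ≤ v}), φ (p : X) ≤ u ∧ C = connectedComponent p}

section MV

variable {X : Type u} [TopologicalSpace X] {K : Type v} [Field K]

/-- The Mayer–Vietoris map
`α_v : Ȟ₀((A∩B)_v) → Ȟ₀(A_v) ⊕ Ȟ₀(B_v)` for the sublevel sets at level `v`. -/
noncomputable def CechTheory.alphaAbs (C : CechTheory X K) (φ : X → ℝ) (A B : Set X)
    (v : ℝ) :
    C.H0 ((A ∩ B) ∩ {x : X | φ x ≤ v}) →ₗ[K]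
      C.H0 (A ∩ {x : X | φ x ≤ v}) × C.H0 (B ∩ {x : X | φ x ≤ v}) :=
  (C.map (show (A ∩ B) ∩ {x : X | φ x ≤ v} ⊆ A ∩ {x : X | φ x ≤ v} from
      fun x hx => ⟨hx.1.1, hx.2⟩)).prod
    (C.map (show (A ∩ B) ∩ {x : X | φ x ≤ v} ⊆ B ∩ {x : X | φ x ≤ v} from
      fun x hx => ⟨hx.1.2, hx.2⟩))

/-- The relative Mayer–Vietoris map
`α_{v,u} : Ȟ₀((A∩B)_v, (A∩B)_u) → Ȟ₀(A_v, A_u) ⊕ Ȟ₀(B_v, B_u)`. -/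
noncomputable def CechTheory.alphaRel (C : CechTheory X K) (φ : X → ℝ) (A B : Set X)
    (u v : ℝ) :
    C.H0rel ((A ∩ B) ∩ {x : X | φ x ≤ v}) ((A ∩ B) ∩ {x : X | φ x ≤ u}) →ₗ[K]
      C.H0rel (A ∩ {x : X | φ x ≤ v}) (A ∩ {x : X | φ x ≤ u}) ×
        C.H0rel (B ∩ {x : X | φ x ≤ v}) (B ∩ {x : X | φ x ≤ u}) :=
  (C.maprel (show (A ∩ B) ∩ {x : X | φ x ≤ v} ⊆ A ∩ {x : X | φ x ≤ v} from
      fun x hx => ⟨hx.1.1, hx.2⟩)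
    (show (A ∩ B) ∩ {x : X | φ x ≤ u} ⊆ A ∩ {x : X | φ x ≤ u} from
      fun x hx => ⟨hx.1.1, hx.2⟩)).prod
  (C.maprel (show (A ∩ B) ∩ {x : X | φ x ≤ v} ⊆ B ∩ {x : X | φ x ≤ v} from
      fun x hx => ⟨hx.1.2, hx.2⟩)
    (show (A ∩ B) ∩ {x : X | φ x ≤ u} ⊆ B ∩ {x : X | φ x ≤ u} from
      fun x hx => ⟨hx.1.2, hx.2⟩))

end MV

section Persist

variable {X : Type u} [TopologicalSpace X] {K : Type v} [Field K]

/-- The homomorphism `Ȟ₀(S_u) → Ȟ₀(S_v)` induced by the inclusion of sublevel sets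
(whose image is the 0-th persistent Čech homology group `Ȟ₀^{u,v}(S)`). -/
noncomputable def CechTheory.persistMap (C : CechTheory X K) (φ : X → ℝ) (S : Set X)
    {u v : ℝ} (huv : u ≤ v) :
    C.H0 (S ∩ {x : X | φ x ≤ u}) →ₗ[K] C.H0 (S ∩ {x : X | φ x ≤ v}) :=
  C.map (show S ∩ {x : X | φ x ≤ u} ⊆ S ∩ {x : X | φ x ≤ v} from
    fun x hx => ⟨hx.1, le_trans hx.2 huv⟩)

/-- The Mayer–Vietoris map `β_v : Ȟ₀(A_v) ⊕ Ȟ₀(B_v) → Ȟ₀(A_v ∪ B_v)`. -/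
noncomputable def CechTheory.betaAbs (C : CechTheory X K) (φ : X → ℝ) (A B : Set X)
    (v : ℝ) :
    C.H0 (A ∩ {x : X | φ x ≤ v}) × C.H0 (B ∩ {x : X | φ x ≤ v}) →ₗ[K]
      C.H0 ((A ∩ {x : X | φ x ≤ v}) ∪ (B ∩ {x : X | φ x ≤ v})) :=
  (C.map (show A ∩ {x : X | φ x ≤ v} ⊆
        (A ∩ {x : X | φ x ≤ v}) ∪ (B ∩ {x : X | φ x ≤ v}) from Set.subset_union_left)).comp
      (LinearMap.fst K _ _) -
    (C.map (show B ∩ {x : X | φ x ≤ v} ⊆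
        (A ∩ {x : X | φ x ≤ v}) ∪ (B ∩ {x : X | φ x ≤ v}) from
        Set.subset_union_right)).comp (LinearMap.snd K _ _)

end Persist

/-! Exactness of the pair sequence makes `Ȟ₀((A∩B)_v, (A∩B)_u)` vanish once `f₀` is onto, so
`α_{v,u} = 0`. Surjectivity of `f₀` also makes `im α` the whole image of `α_v`, which is
`ker β_v` by Mayer–Vietoris exactness; by naturality of `α` this image already lies in
`im g₀`. -/

namespace CechTheory

variable {X : Type u} [TopologicalSpace X] {K : Type v} [Field K] (C : CechTheory X K)

@[simp]
theorem map_map {S T U : Set X} (h₁ : S ⊆ T) (h₂ : T ⊆ U) (x : C.H0 S) :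
    C.map h₂ (C.map h₁ x) = C.map (h₁.trans h₂) x := by
  rw [← LinearMap.comp_apply, C.map_comp]

theorem subsingleton_H0rel_of_surjective {S T : Set X} {h : S ⊆ T}
    (hs : Function.Surjective (C.map h)) : Subsingleton (C.H0rel T S) := by
  refine subsingleton_of_forall_eq 0 fun z => ?_
  obtain ⟨y, rfl⟩ := C.quot_surjective T S h z
  rw [← LinearMap.mem_ker, ← C.exact_pair h]
  exact hs y

theorem range_prod_map_eq_ker_of_eq_inter {A B E : Set X} (hA : IsCompact A)
    (hB : IsCompact B) (hE : E = A ∩ B) (hEA : E ⊆ A) (hEB : E ⊆ B) :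
    LinearMap.range ((C.map hEA).prod (C.map hEB)) =
      LinearMap.ker ((C.map (show A ⊆ A ∪ B from Set.subset_union_left)).comp
          (LinearMap.fst K (C.H0 A) (C.H0 B)) -
        (C.map (show B ⊆ A ∪ B from Set.subset_union_right)).comp
          (LinearMap.snd K (C.H0 A) (C.H0 B))) := by
  subst hE
  exact C.mv_exact A B hA hB

theorem range_alphaAbs_eq_ker_betaAbs (φ : X → ℝ) {A B : Set X} {v : ℝ}
    (hA : IsCompact (A ∩ {x : X | φ x ≤ v})) (hB : IsCompact (B ∩ {x : X | φ x ≤ v})) :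
    LinearMap.range (C.alphaAbs φ A B v) = LinearMap.ker (C.betaAbs φ A B v) :=
  C.range_prod_map_eq_ker_of_eq_inter hA hB (Set.inter_inter_distrib_right A B _) _ _

theorem alphaAbs_persistMap (φ : X → ℝ) (A B : Set X) {u v : ℝ} (huv : u ≤ v)
    (w : C.H0 ((A ∩ B) ∩ {x : X | φ x ≤ u})) :
    C.alphaAbs φ A B v (C.persistMap φ (A ∩ B) huv w) =
      Prod.map (C.persistMap φ A huv) (C.persistMap φ B huv) (C.alphaAbs φ A B u w) := by
  simp [alphaAbs, persistMap]

theorem map_alphaAbs_range_persistMap_le (φ : X → ℝ) (A B : Set X) {u v : ℝ} (huv : u ≤ v) :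
    Submodule.map (C.alphaAbs φ A B v) (LinearMap.range (C.persistMap φ (A ∩ B) huv)) ≤
      (LinearMap.range (C.persistMap φ A huv)).prod
        (LinearMap.range (C.persistMap φ B huv)) := by
  rintro _ ⟨_, ⟨w, rfl⟩, rfl⟩
  rw [alphaAbs_persistMap]
  exact ⟨⟨_, rfl⟩, ⟨_, rfl⟩⟩

end CechTheory

theorem isCompact_inter_sublevel {X : Type u} [TopologicalSpace X] [CompactSpace X]
    {S : Set X} (hS : IsClosed S) {φ : X → ℝ} (hφ : Continuous φ) (v : ℝ) :
    IsCompact (S ∩ {x : X | φ x ≤ v}) :=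
  (hS.inter (isClosed_le hφ continuous_const)).isCompact

theorem alphaRel_eq_zero_of_f0_surjective_general {X : Type u} [TopologicalSpace X]
    [CompactSpace X] {K : Type v}
    [Field K] (C : CechTheory X K) {A B : Set X} (hA : IsClosed A) (hB : IsClosed B)
    {φ : X → ℝ} (hφ : Continuous φ) {u v : ℝ} (huv : u < v)
    (hf0 : Function.Surjective (C.persistMap φ (A ∩ B) huv.le)) :
    C.alphaRel φ A B u v = 0 ∧
    Submodule.map (C.alphaAbs φ A B v) (LinearMap.range (C.persistMap φ (A ∩ B) huv.le))
      = (LinearMap.range (C.persistMap φ A huv.le)).prod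
          (LinearMap.range (C.persistMap φ B huv.le)) ⊓
        LinearMap.ker (C.betaAbs φ A B v) := by
  have := C.subsingleton_H0rel_of_surjective hf0
  refine ⟨Subsingleton.elim _ _, ?_⟩
  have hexact := C.range_alphaAbs_eq_ker_betaAbs φ
    (isCompact_inter_sublevel hA hφ v) (isCompact_inter_sublevel hB hφ v)
  have hle := C.map_alphaAbs_range_persistMap_le φ A B huv.le
  rw [LinearMap.range_eq_top.mpr hf0, Submodule.map_top, hexact] at hle ⊢
  exact (inf_eq_right.mpr hle).symm

/-- Lemma 4.10: for `X = A ∪ B` with the standing hypotheses and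
`u < v`, if the inclusion-induced map `f₀ : Ȟ₀((A∩B)_u) → Ȟ₀((A∩B)_v)` is surjective,
then the relative Mayer–Vietoris map `α_{v,u}` is the zero map, and the image of the
restriction `α = α_v|_{im f₀}` equals the kernel of the restriction `β = β_v|_{im g₀}`. -/
theorem alphaRel_eq_zero_of_f0_surjective {X : Type u} [TopologicalSpace X]
    [CompactSpace X] [T2Space X] [LocallyConnectedSpace X] [Nonempty X] {K : Type v}
    [Field K] (C : CechTheory X K) {A B : Set X} (hA : IsClosed A) (hB : IsClosed B)
    (hUnion : A ∪ B = Set.univ) (hInt : interior A ∪ interior B = Set.univ)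
    [LocallyConnectedSpace ↥A] [LocallyConnectedSpace ↥B]
    [LocallyConnectedSpace ↥(A ∩ B)]
    {φ : X → ℝ} (hφ : Continuous φ) {u v : ℝ} (huv : u < v)
    (hf0 : Function.Surjective (C.persistMap φ (A ∩ B) huv.le)) :
    C.alphaRel φ A B u v = 0 ∧
    Submodule.map (C.alphaAbs φ A B v) (LinearMap.range (C.persistMap φ (A ∩ B) huv.le))
      = (LinearMap.range (C.persistMap φ A huv.le)).prod
          (LinearMap.range (C.persistMap φ B huv.le)) ⊓
        LinearMap.ker (C.betaAbs φ A B v) :=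
  alphaRel_eq_zero_of_f0_surjective_general C hA hB hφ huv hf0
end

section
/- In the setting X = A ∪ B with the standing hypotheses, fix u < v. If ℓ_{(A∩B, φ|A∩B)}(u, v') = ℓ_{(A∩B, φ|A∩B)}(v, v') ≤ 1 for every v' > v, then both ker α_v = 0 and ker α_{v,u} = 0; in particular ℓ_{(X,φ)}(u,v) = ℓ_{(A,φ|A)}(u,v) + ℓ_{(B,φ|B)}(u,v) − ℓ_{(A∩B,φ|A∩B)}(u,v). -/
universe u v

/-!
The sublevel set `(A ∩ B)_v` is the decreasing intersection, over `v' > v`, of the closures of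
the components of `(A ∩ B)_{v'}` through one of its points, since by hypothesis there is only
one such component reaching down to level `v`; so `(A ∩ B)_v` is preconnected, and by the
equality of size functions it reaches down to level `u` as soon as it is nonempty. Its `Ȟ₀` is
then spanned by the class of a point of level `≤ u`, which is nonzero in `Ȟ₀(A_v)`; this gives
`ker α_v = 0` and `Ȟ₀((A ∩ B)_v, (A ∩ B)_u) = 0`.

The counting identity is elementary: a component of `X_v` missing `(A ∩ B)_v` is a component of
`A_v` or of `B_v` missing it, and conversely (this direction uses compactness), while each of
`X_v`, `A_v`, `B_v`, `(A ∩ B)_v` has exactly one component meeting `(A ∩ B)_v` if this set is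
nonempty.
-/

open Set Topology

section Connectedness

variable {X : Type*} [TopologicalSpace X]

theorem connectedComponentIn_eq_of_subset {F G : Set X} {x : X} (hx : x ∈ F) (hFG : F ⊆ G)
    (h : connectedComponentIn G x ⊆ F) : connectedComponentIn F x = connectedComponentIn G x :=
  (connectedComponentIn_mono x hFG).antisymm
    (isPreconnected_connectedComponentIn.subset_connectedComponentIn
      (mem_connectedComponentIn (hFG hx)) h)

theorem Topology.IsEmbedding.image_connectedComponentIn {Y : Type*} [TopologicalSpace Y]
    {f : X → Y} (hf : IsEmbedding f) {F : Set X} {x : X} (hx : x ∈ F) :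
    f '' connectedComponentIn F x = connectedComponentIn (f '' F) (f x) := by
  refine (hf.continuous.continuousOn.image_connectedComponentIn_subset hx).antisymm ?_
  set D := connectedComponentIn (f '' F) (f x)
  have hDF : D ⊆ f '' F := connectedComponentIn_subset _ _
  have hD : f '' (f ⁻¹' D) = D :=
    image_preimage_eq_of_subset (hDF.trans (image_subset_range f F))
  have hpre : IsPreconnected (f ⁻¹' D) := by
    rw [← hf.isInducing.isPreconnected_image, hD]
    exact isPreconnected_connectedComponentIn
  have hsub : f ⁻¹' D ⊆ F := fun y hy => by
    obtain ⟨z, hz, hzy⟩ := hDF hy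
    exact hf.injective hzy ▸ hz
  rw [← hD]
  exact image_mono
    (hpre.subset_connectedComponentIn (mem_connectedComponentIn (mem_image_of_mem f hx)) hsub)

theorem finite_image_connectedComponentIn [LocallyConnectedSpace X] {K U T : Set X}
    (hK : IsCompact K) (hU : IsOpen U) (hKU : K ⊆ U) (hUT : U ⊆ T) :
    (connectedComponentIn T '' K).Finite := by
  obtain ⟨t, -, htfin, hKt⟩ := hK.elim_finite_subcover_image (c := connectedComponentIn U)
    (fun _ _ => hU.connectedComponentIn)
    (fun x hx => mem_biUnion hx (mem_connectedComponentIn (hKU hx)))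
  refine (htfin.image (connectedComponentIn T)).subset ?_
  rintro _ ⟨x, hx, rfl⟩
  obtain ⟨i, hi, hxi⟩ := mem_iUnion₂.mp (hKt hx)
  exact ⟨i, hi, connectedComponentIn_eq (connectedComponentIn_mono i hUT hxi)⟩

theorem exists_isClopen_mem_subset_of_connectedComponent_subset [CompactSpace X] [T2Space X]
    {x : X} {U : Set X} (hU : IsOpen U) (h : connectedComponent x ⊆ U) :
    ∃ Z, IsClopen Z ∧ x ∈ Z ∧ Z ⊆ U := by
  have hF : IsClosed (ConnectedComponents.mk '' Uᶜ) :=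
    (hU.isClosed_compl.isCompact.image ConnectedComponents.continuous_coe).isClosed
  have hx : ConnectedComponents.mk x ∉ ConnectedComponents.mk '' Uᶜ := by
    rintro ⟨y, hyU, hyx⟩
    exact hyU (h (ConnectedComponents.coe_eq_coe'.mp hyx))
  obtain ⟨V, hV, hxV, hVF⟩ := compact_exists_isClopen_in_isOpen hF.isOpen_compl hx
  refine ⟨ConnectedComponents.mk ⁻¹' V, hV.preimage ConnectedComponents.continuous_coe, hxV,
    fun y hy => ?_⟩
  by_contra hyU
  exact hVF hy ⟨y, hyU, rfl⟩

theorem isPreconnected_iInter_of_directed [T2Space X] {ι : Type*} [Nonempty ι]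
    {C : ι → Set X} (hdir : Directed (· ⊇ ·) C) (hcpt : ∀ i, IsCompact (C i))
    (hpre : ∀ i, IsPreconnected (C i)) : IsPreconnected (⋂ i, C i) := by
  set I := ⋂ i, C i
  have hI : IsCompact I := (hcpt (Classical.arbitrary ι)).of_isClosed_subset
    (isClosed_iInter fun i => (hcpt i).isClosed) (iInter_subset _ _)
  rw [isPreconnected_iff_subset_of_disjoint_closed]
  intro u v hu hv huv hdisj
  obtain ⟨U, V, hU, hV, huU, hvV, hUV⟩ := SeparatedNhds.of_isCompact_isCompact
    (hI.inter_right hu) (hI.inter_right hv)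
    (by rwa [disjoint_iff_inter_eq_empty, ← inter_inter_distrib_left])
  obtain ⟨i, hi⟩ := exists_subset_nhds_of_isCompact hdir hcpt fun x hx =>
    (hU.union hV).mem_nhds
      ((huv hx).imp (fun hxu => huU ⟨hx, hxu⟩) fun hxv => hvV ⟨hx, hxv⟩)
  rcases (hpre i).subset_or_subset hU hV hUV hi with hiU | hiV
  · exact .inl fun x hx => (huv hx).resolve_right fun hxv =>
      disjoint_left.mp hUV (hiU (mem_iInter.mp hx i)) (hvV ⟨hx, hxv⟩)
  · exact .inr fun x hx => (huv hx).resolve_left fun hxu =>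
      disjoint_left.mp hUV (huU ⟨hx, hxu⟩) (hiV (mem_iInter.mp hx i))

/-- Compactness of `A` makes the component of `p` in `A` an intersection of relatively clopen
sets, one of which separates it from `B`; without it the lemma fails. -/
theorem connectedComponentIn_union_eq_left [T2Space X] {A B : Set X} (hA : IsCompact A)
    (hB : IsClosed B) {p : X} (hp : p ∈ A) (hdisj : Disjoint (connectedComponentIn A p) B) :
    connectedComponentIn (A ∪ B) p = connectedComponentIn A p := by
  have : CompactSpace A := isCompact_iff_compactSpace.mp hA
  obtain ⟨Z, hZ, hpZ, hZB⟩ := exists_isClopen_mem_subset_of_connectedComponent_subset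
    (x := (⟨p, hp⟩ : A)) (hB.isOpen_compl.preimage continuous_subtype_val) fun y hy =>
      disjoint_left.mp hdisj (by rw [connectedComponentIn_eq_image hp]; exact ⟨y, hy, rfl⟩)
  have hval := hA.isClosed.isClosedEmbedding_subtypeVal
  have hcover : A ∪ B ⊆ Subtype.val '' Z ∪ (Subtype.val '' Zᶜ ∪ B) := by
    rintro x (hx | hx)
    · by_cases hxZ : (⟨x, hx⟩ : A) ∈ Z
      · exact .inl ⟨_, hxZ, rfl⟩
      · exact .inr (.inl ⟨_, hxZ, rfl⟩)
    · exact .inr (.inr hx)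
  have hsep : Disjoint (Subtype.val '' Z) (Subtype.val '' Zᶜ ∪ B) := by
    refine disjoint_union_right.mpr ⟨(disjoint_image_iff Subtype.val_injective).mpr
      disjoint_compl_right, disjoint_left.mpr ?_⟩
    rintro _ ⟨y, hy, rfl⟩
    exact hZB hy
  obtain hZ' | hZ' := isPreconnected_iff_subset_of_disjoint_closed.mp
    (isPreconnected_connectedComponentIn (x := p) (F := A ∪ B))
    _ _ (hval.isClosedMap _ hZ.isClosed) ((hval.isClosedMap _ hZ.compl.isClosed).union hB)
    ((connectedComponentIn_subset _ _).trans hcover)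
    (by rw [hsep.inter_eq, inter_empty])
  · refine (connectedComponentIn_eq_of_subset hp subset_union_left ?_).symm
    exact hZ'.trans (image_subset_range _ _ |>.trans Subtype.range_val.subset)
  · exact absurd (hZ' (mem_connectedComponentIn (.inl hp)))
      (disjoint_left.mp hsep ⟨_, hpZ, rfl⟩)

end Connectedness

section ComponentsMeeting

variable {X : Type*} [TopologicalSpace X]

/-- `ℓ_{(S', φ)}(u, v)` is the number of `componentsMeeting (S' ∩ {φ ≤ v}) {φ ≤ u}`. -/
def componentsMeeting (T S : Set X) : Set (Set X) :=
  connectedComponentIn T '' (T ∩ S)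

variable {S T : Set X}

theorem subset_of_mem_componentsMeeting {C : Set X} (hC : C ∈ componentsMeeting T S) :
    C ⊆ T := by
  obtain ⟨p, -, rfl⟩ := hC
  exact connectedComponentIn_subset T p

theorem componentsMeeting_inter_eq_singleton {K : Set X} (hKT : K ⊆ T) (hK : IsPreconnected K)
    {q : X} (hq : q ∈ K ∩ S) :
    componentsMeeting T S ∩ {C | (C ∩ K).Nonempty} = {connectedComponentIn T q} := by
  ext D
  constructor
  · rintro ⟨⟨p, -, rfl⟩, z, hzD, hzK⟩
    rw [connectedComponentIn_eq hzD]
    exact connectedComponentIn_eq (hK.subset_connectedComponentIn hzK hKT hq.1)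
  · rintro rfl
    exact ⟨⟨q, ⟨hKT hq.1, hq.2⟩, rfl⟩, q, mem_connectedComponentIn (hKT hq.1), hq.1⟩

theorem encard_componentsMeeting_inter_eq {K : Set X} (hKT : K ⊆ T) (hK : IsPreconnected K)
    (hKS : K.Nonempty → (K ∩ S).Nonempty) :
    (componentsMeeting T S ∩ {C | (C ∩ K).Nonempty}).encard =
      (componentsMeeting K S).encard := by
  rcases K.eq_empty_or_nonempty with rfl | hne
  · simp [componentsMeeting]
  obtain ⟨q, hq⟩ := hKS hne
  have hKK : componentsMeeting K S ⊆ {C | (C ∩ K).Nonempty} := by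
    rintro _ ⟨p, hp, rfl⟩
    exact ⟨p, mem_connectedComponentIn hp.1, hp.1⟩
  rw [componentsMeeting_inter_eq_singleton hKT hK hq, ← inter_eq_left.mpr hKK,
    componentsMeeting_inter_eq_singleton subset_rfl hK hq, encard_singleton, encard_singleton]

theorem componentsMeeting_left_diff_subset [T2Space X] {A B : Set X} (hA : IsCompact A)
    (hB : IsClosed B) :
    componentsMeeting A S \ {C | (C ∩ (A ∩ B)).Nonempty} ⊆
      componentsMeeting (A ∪ B) S \ {C | (C ∩ (A ∩ B)).Nonempty} := by
  rintro _ ⟨⟨p, hp, rfl⟩, hK⟩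
  refine ⟨⟨p, ⟨.inl hp.1, hp.2⟩, connectedComponentIn_union_eq_left hA hB hp.1 ?_⟩, hK⟩
  exact disjoint_left.mpr fun z hz hzB => hK ⟨z, hz, connectedComponentIn_subset _ _ hz, hzB⟩

theorem componentsMeeting_union_diff_subset {A B : Set X} (hA : IsClosed A) (hB : IsClosed B) :
    componentsMeeting (A ∪ B) S \ {C | (C ∩ (A ∩ B)).Nonempty} ⊆
      (componentsMeeting A S \ {C | (C ∩ (A ∩ B)).Nonempty}) ∪
        (componentsMeeting B S \ {C | (C ∩ (A ∩ B)).Nonempty}) := by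
  rintro _ ⟨⟨p, hp, rfl⟩, hK⟩
  have hp' := mem_connectedComponentIn hp.1
  rcases isPreconnected_iff_subset_of_disjoint_closed.mp isPreconnected_connectedComponentIn
    A B hA hB (connectedComponentIn_subset _ _) (not_nonempty_iff_eq_empty.mp hK) with hDA | hDB
  · exact .inl ⟨⟨p, ⟨hDA hp', hp.2⟩, connectedComponentIn_eq_of_subset (hDA hp')
      subset_union_left hDA⟩, hK⟩
  · exact .inr ⟨⟨p, ⟨hDB hp', hp.2⟩, connectedComponentIn_eq_of_subset (hDB hp')
      subset_union_right hDB⟩, hK⟩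

theorem componentsMeeting_union_diff [T2Space X] {A B : Set X} (hA : IsCompact A)
    (hB : IsCompact B) :
    componentsMeeting (A ∪ B) S \ {C | (C ∩ (A ∩ B)).Nonempty} =
      (componentsMeeting A S \ {C | (C ∩ (A ∩ B)).Nonempty}) ∪
        (componentsMeeting B S \ {C | (C ∩ (A ∩ B)).Nonempty}) := by
  refine (componentsMeeting_union_diff_subset hA.isClosed hB.isClosed).antisymm
    (union_subset (componentsMeeting_left_diff_subset hA hB.isClosed) ?_)
  rw [union_comm A B, inter_comm A B]
  exact componentsMeeting_left_diff_subset hB hA.isClosed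

theorem disjoint_componentsMeeting_diff {A B : Set X} :
    Disjoint (componentsMeeting A S \ {C | (C ∩ (A ∩ B)).Nonempty})
      (componentsMeeting B S \ {C | (C ∩ (A ∩ B)).Nonempty}) := by
  refine disjoint_left.mpr ?_
  rintro _ ⟨⟨p, hp, rfl⟩, hK⟩ ⟨hB, -⟩
  have hp' := mem_connectedComponentIn hp.1
  exact hK ⟨p, hp', hp.1, subset_of_mem_componentsMeeting hB hp'⟩

theorem encard_componentsMeeting_union_add_inter [T2Space X] {A B : Set X} (hA : IsCompact A)
    (hB : IsCompact B) (hAB : IsPreconnected (A ∩ B))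
    (hABS : (A ∩ B).Nonempty → (A ∩ B ∩ S).Nonempty) :
    (componentsMeeting (A ∪ B) S).encard + (componentsMeeting (A ∩ B) S).encard =
      (componentsMeeting A S).encard + (componentsMeeting B S).encard := by
  have hsplit := fun T : Set X =>
    (encard_sdiff_add_encard_inter (componentsMeeting T S) {C | (C ∩ (A ∩ B)).Nonempty}).symm
  rw [hsplit (A ∪ B), hsplit A, hsplit B, componentsMeeting_union_diff hA hB,
    encard_union_eq disjoint_componentsMeeting_diff,
    encard_componentsMeeting_inter_eq (inter_subset_left.trans subset_union_left) hAB hABS,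
    encard_componentsMeeting_inter_eq inter_subset_left hAB hABS,
    encard_componentsMeeting_inter_eq inter_subset_right hAB hABS]
  ring

end ComponentsMeeting

section SizeFunctions

variable {X : Type*} [TopologicalSpace X] {φ : X → ℝ} {u v : ℝ}

theorem sizeFunOn_eq_ncard_componentsMeeting (S : Set X) (φ : X → ℝ) (u v : ℝ) :
    sizeFunOn S φ u v = (componentsMeeting (S ∩ {x | φ x ≤ v}) {x | φ x ≤ u}).ncard := by
  rw [sizeFunOn, ← ncard_image_of_injective _ (image_injective.mpr Subtype.val_injective)]
  congr 1
  ext D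
  constructor
  · rintro ⟨_, ⟨p, hpu, rfl⟩, rfl⟩
    exact ⟨p, ⟨p.2, hpu⟩, connectedComponentIn_eq_image p.2⟩
  · rintro ⟨p, ⟨hpT, hpu⟩, rfl⟩
    exact ⟨_, ⟨⟨p, hpT⟩, hpu, rfl⟩, (connectedComponentIn_eq_image hpT).symm⟩

theorem finite_componentsMeeting_sublevel {S : Set X} [LocallyConnectedSpace S]
    (hS : IsCompact S) (hφ : Continuous φ) (huv : u < v) :
    (componentsMeeting (S ∩ {x | φ x ≤ v}) {x | φ x ≤ u}).Finite := by
  have : CompactSpace S := isCompact_iff_compactSpace.mp hS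
  have hψ : Continuous fun y : S => φ y := hφ.comp continuous_subtype_val
  set T : Set S := Subtype.val ⁻¹' {x | φ x ≤ v}
  have hfin : (connectedComponentIn T '' {y | φ y ≤ u}).Finite :=
    finite_image_connectedComponentIn (isClosed_le hψ continuous_const).isCompact
      (isOpen_lt hψ continuous_const) (fun _ hy => lt_of_le_of_lt hy huv)
      fun _ hy => show φ _ ≤ v from le_of_lt hy
  refine (hfin.image (image Subtype.val)).subset ?_
  rintro _ ⟨p, ⟨⟨hpS, hpv⟩, hpu⟩, rfl⟩
  refine ⟨connectedComponentIn T ⟨p, hpS⟩, ⟨⟨p, hpS⟩, hpu, rfl⟩, ?_⟩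
  rw [IsEmbedding.subtypeVal.image_connectedComponentIn (show ⟨p, hpS⟩ ∈ T from hpv),
    Subtype.image_preimage_coe]

theorem isPreconnected_inter_sublevel [T2Space X] {S : Set X} (hS : IsCompact S)
    (hφ : Continuous φ)
    (h : ∀ v' > v, (componentsMeeting (S ∩ {x | φ x ≤ v'}) {x | φ x ≤ v}).Subsingleton) :
    IsPreconnected (S ∩ {x | φ x ≤ v}) := by
  rcases (S ∩ {x | φ x ≤ v}).eq_empty_or_nonempty with h0 | ⟨x, hx⟩
  · rw [h0]
    exact isPreconnected_empty
  set T : Ioi v → Set X := fun w => S ∩ {x | φ x ≤ w}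
  have hT : ∀ w, IsCompact (T w) := fun w => hS.inter_right (isClosed_le hφ continuous_const)
  have hvT : ∀ w, S ∩ {x | φ x ≤ v} ⊆ T w := fun w y hy =>
    ⟨hy.1, show φ y ≤ w from (hy.2 : φ y ≤ v).trans w.2.le⟩
  have hclT : ∀ w, closure (connectedComponentIn (T w) x) ⊆ T w := fun w =>
    closure_minimal (connectedComponentIn_subset _ _) (hT w).isClosed
  have hmono : Monotone fun w => closure (connectedComponentIn (T w) x) := fun w w' hww' =>
    closure_mono (connectedComponentIn_mono x (inter_subset_inter_right S fun y hy =>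
      hy.trans (show (w : ℝ) ≤ w' from hww')))
  convert isPreconnected_iInter_of_directed hmono.directed_ge
    (fun w => (hT w).of_isClosed_subset isClosed_closure (hclT w))
    (fun w => isPreconnected_connectedComponentIn.closure)
  refine (subset_iInter fun w y hy => subset_closure ?_).antisymm fun y hy => ?_
  · rw [h w w.2 ⟨x, ⟨hvT w hx, hx.2⟩, rfl⟩ ⟨y, ⟨hvT w hy, hy.2⟩, rfl⟩]
    exact mem_connectedComponentIn (hvT w hy)
  · have hyT : ∀ w, y ∈ T w := fun w => hclT w (mem_iInter.mp hy w)
    exact ⟨(hyT ⟨v + 1, by simp⟩).1,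
      le_of_forall_gt_imp_ge_of_dense fun w hw => (hyT ⟨w, hw⟩).2⟩

variable {S : Set X} [LocallyConnectedSpace S]

theorem isPreconnected_inter_sublevel_of_sizeFunOn_le_one [T2Space X] (hS : IsCompact S)
    (hφ : Continuous φ) (h : ∀ v' > v, sizeFunOn S φ v v' ≤ 1) :
    IsPreconnected (S ∩ {x | φ x ≤ v}) :=
  isPreconnected_inter_sublevel hS hφ fun v' hv' => by
    have := (finite_componentsMeeting_sublevel hS hφ hv').to_subtype
    rw [← ncard_le_one_iff_subsingleton, ← sizeFunOn_eq_ncard_componentsMeeting]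
    exact h v' hv'

theorem nonempty_inter_sublevel_of_sizeFunOn_eq (hS : IsCompact S) (hφ : Continuous φ)
    {v' : ℝ} (hvv' : v < v') (h : sizeFunOn S φ u v' = sizeFunOn S φ v v')
    (hne : (S ∩ {x | φ x ≤ v}).Nonempty) : (S ∩ {x | φ x ≤ u}).Nonempty := by
  rw [sizeFunOn_eq_ncard_componentsMeeting, sizeFunOn_eq_ncard_componentsMeeting] at h
  obtain ⟨x, hxS, hxv⟩ := hne
  have hpos := (ncard_pos (finite_componentsMeeting_sublevel hS hφ hvv')).mpr
    (.image _ ⟨x, ⟨hxS, hxv.trans hvv'.le⟩, hxv⟩)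
  obtain ⟨p, ⟨hpS, -⟩, hpu⟩ := (nonempty_of_ncard_ne_zero (h ▸ hpos).ne').of_image
  exact ⟨p, hpS, hpu⟩

theorem sizeFunOn_union_add_sizeFunOn_inter [T2Space X] {A B : Set X} [LocallyConnectedSpace A]
    [LocallyConnectedSpace B] (hA : IsCompact A) (hB : IsCompact B) (hφ : Continuous φ)
    (huv : u < v) (hpre : IsPreconnected (A ∩ B ∩ {x | φ x ≤ v}))
    (hne : (A ∩ B ∩ {x | φ x ≤ v}).Nonempty → (A ∩ B ∩ {x | φ x ≤ u}).Nonempty) :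
    sizeFunOn (A ∪ B) φ u v + sizeFunOn (A ∩ B) φ u v =
      sizeFunOn A φ u v + sizeFunOn B φ u v := by
  have hLv : IsClosed {x | φ x ≤ v} := isClosed_le hφ continuous_const
  have key := encard_componentsMeeting_union_add_inter (S := {x | φ x ≤ u})
    (hA.inter_right hLv) (hB.inter_right hLv) (inter_inter_distrib_right A B _ ▸ hpre)
    (fun h => by
      obtain ⟨y, hy, hyu⟩ := hne (inter_inter_distrib_right A B _ ▸ h)
      exact ⟨y, ⟨⟨hy.1, hyu.trans huv.le⟩, hy.2, hyu.trans huv.le⟩, hyu⟩)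
  rw [← union_inter_distrib_right, ← inter_inter_distrib_right] at key
  have hfinA := finite_componentsMeeting_sublevel hA hφ huv
  have hfinB := finite_componentsMeeting_sublevel hB hφ huv
  obtain ⟨hfinU, hfinI⟩ := WithTop.add_ne_top.mp
    (key ▸ WithTop.add_ne_top.mpr ⟨hfinA.encard_lt_top.ne, hfinB.encard_lt_top.ne⟩)
  simp only [sizeFunOn_eq_ncard_componentsMeeting]
  apply Nat.cast_injective (R := ℕ∞)
  push_cast
  rwa [(encard_ne_top_iff.mp hfinU).cast_ncard_eq, (encard_ne_top_iff.mp hfinI).cast_ncard_eq,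
    hfinA.cast_ncard_eq, hfinB.cast_ncard_eq]

end SizeFunctions

namespace CechTheory

variable {X : Type u} [TopologicalSpace X] {K : Type v} [Field K] (C : CechTheory X K)

theorem subsingleton_H0_empty : Subsingleton (C.H0 ∅) := by
  have h := C.cls_span ∅ isCompact_empty
  rw [range_eq_empty, Submodule.span_empty] at h
  exact (Submodule.subsingleton_iff K).mp (subsingleton_iff_bot_eq_top.mp h)

theorem cls_ne_zero {S : Set X} (hS : IsCompact S) (x : S) : C.cls S x ≠ 0 := by
  have hsec : ∀ c : ConnectedComponents S, ConnectedComponents.mk c.out = c := Quotient.out_eq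
  have h := (C.cls_indep S hS _ hsec).ne_zero (ConnectedComponents.mk x)
  rwa [(C.cls_eq_iff S hS _ _).mpr (ConnectedComponents.coe_eq_coe.mp (hsec _))] at h

theorem span_cls_eq_top {T : Set X} (hT : IsCompact T) (hpre : IsPreconnected T) (x : T) :
    Submodule.span K {C.cls T x} = ⊤ := by
  have := isPreconnected_iff_preconnectedSpace.mp hpre
  have hrange : range (C.cls T) = {C.cls T x} := by
    refine eq_singleton_iff_unique_mem.mpr ⟨mem_range_self x, ?_⟩
    rintro _ ⟨y, rfl⟩
    rw [C.cls_eq_iff T hT, PreconnectedSpace.connectedComponent_eq_univ,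
      PreconnectedSpace.connectedComponent_eq_univ]
  rw [← hrange, C.cls_span T hT]

theorem map_injective_of_isPreconnected {T A : Set X} (hT : IsCompact T)
    (hpre : IsPreconnected T) (hA : IsCompact A) (h : T ⊆ A) : Function.Injective (C.map h) := by
  rcases T.eq_empty_or_nonempty with rfl | ⟨x, hx⟩
  · have := C.subsingleton_H0_empty
    exact Function.injective_of_subsingleton _
  refine (injective_iff_map_eq_zero _).mpr fun z hz => ?_
  obtain ⟨a, rfl⟩ := Submodule.mem_span_singleton.mp
    (C.span_cls_eq_top hT hpre ⟨x, hx⟩ ▸ Submodule.mem_top : z ∈ Submodule.span K _)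
  rw [map_smul, C.map_cls, smul_eq_zero] at hz
  rw [hz.resolve_right (C.cls_ne_zero hA _), zero_smul]

theorem map_surjective_of_isPreconnected {S T : Set X} (hT : IsCompact T)
    (hpre : IsPreconnected T) (h : S ⊆ T) (hne : T.Nonempty → S.Nonempty) :
    Function.Surjective (C.map h) := by
  rcases T.eq_empty_or_nonempty with rfl | hT'
  · have := C.subsingleton_H0_empty
    exact fun _ => ⟨0, Subsingleton.elim _ _⟩
  obtain ⟨x, hx⟩ := hne hT'
  rw [← LinearMap.range_eq_top, eq_top_iff, ← C.span_cls_eq_top hT hpre ⟨x, h hx⟩,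
    Submodule.span_le, singleton_subset_iff]
  exact ⟨C.cls S ⟨x, hx⟩, C.map_cls h _⟩

theorem subsingleton_H0rel_of_map_surjective {S T : Set X} (h : S ⊆ T)
    (hsurj : Function.Surjective (C.map h)) : Subsingleton (C.H0rel T S) := by
  have hquot : C.quot T S = 0 := by
    rw [← LinearMap.ker_eq_top, ← C.exact_pair h, LinearMap.range_eq_top.mpr hsurj]
  refine subsingleton_of_forall_eq 0 fun y => ?_
  obtain ⟨z, rfl⟩ := C.quot_surjective T S h y
  rw [hquot, LinearMap.zero_apply]

end CechTheory

theorem alpha_injective_of_sizeFun_inter_general {X : Type u} [TopologicalSpace X]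
    [CompactSpace X] [T2Space X] {K : Type v}
    [Field K] (C : CechTheory X K) {A B : Set X} (hA : IsClosed A) (hB : IsClosed B)
    (hUnion : A ∪ B = Set.univ)
    [LocallyConnectedSpace ↥A] [LocallyConnectedSpace ↥B]
    [LocallyConnectedSpace ↥(A ∩ B)]
    {φ : X → ℝ} (hφ : Continuous φ) {u v : ℝ} (huv : u < v)
    (hsz : ∀ v' > v, sizeFunOn (A ∩ B) φ u v' = sizeFunOn (A ∩ B) φ v v' ∧
      sizeFunOn (A ∩ B) φ v v' ≤ 1) :
    LinearMap.ker (C.alphaAbs φ A B v) = ⊥ ∧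
    LinearMap.ker (C.alphaRel φ A B u v) = ⊥ ∧
    (sizeFunOn Set.univ φ u v : ℤ) =
      (sizeFunOn A φ u v : ℤ) + (sizeFunOn B φ u v : ℤ)
        - (sizeFunOn (A ∩ B) φ u v : ℤ) := by
  have hLv : IsClosed {x | φ x ≤ v} := isClosed_le hφ continuous_const
  have hI : IsCompact (A ∩ B) := (hA.inter hB).isCompact
  have hpre : IsPreconnected (A ∩ B ∩ {x | φ x ≤ v}) :=
    isPreconnected_inter_sublevel_of_sizeFunOn_le_one hI hφ fun v' hv' => (hsz v' hv').2
  have hne : (A ∩ B ∩ {x | φ x ≤ v}).Nonempty → (A ∩ B ∩ {x | φ x ≤ u}).Nonempty :=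
    nonempty_inter_sublevel_of_sizeFunOn_eq hI hφ (lt_add_one v) (hsz _ (lt_add_one v)).1
  refine ⟨?_, ?_, ?_⟩
  · exact LinearMap.ker_eq_bot.mpr fun z w h =>
      C.map_injective_of_isPreconnected (hI.inter_right hLv) hpre (hA.isCompact.inter_right hLv)
        _ (congrArg Prod.fst h)
  · have huv' : A ∩ B ∩ {x | φ x ≤ u} ⊆ A ∩ B ∩ {x | φ x ≤ v} :=
      inter_subset_inter_right _ fun x (hx : φ x ≤ u) => hx.trans huv.le
    have hsurj := C.map_surjective_of_isPreconnected (hI.inter_right hLv) hpre huv' hne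
    have := C.subsingleton_H0rel_of_map_surjective _ hsurj
    exact LinearMap.ker_eq_bot.mpr (Function.injective_of_subsingleton _)
  · have := sizeFunOn_union_add_sizeFunOn_inter hA.isCompact hB.isCompact hφ huv hpre hne
    rw [hUnion] at this
    omega

/-- Theorem 4.11: for `X = A ∪ B` with the standing hypotheses and
`u < v`, if `ℓ_{(A∩B)}(u, v') = ℓ_{(A∩B)}(v, v') ≤ 1` for every `v' > v`, then both
`ker α_v = 0` and `ker α_{v,u} = 0`; in particular the Mayer–Vietoris equality
`ℓ_{(X,φ)}(u,v) = ℓ_{(A,φ|A)}(u,v) + ℓ_{(B,φ|B)}(u,v) − ℓ_{(A∩B,φ|A∩B)}(u,v)` holds. -/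
theorem alpha_injective_of_sizeFun_inter {X : Type u} [TopologicalSpace X]
    [CompactSpace X] [T2Space X] [LocallyConnectedSpace X] [Nonempty X] {K : Type v}
    [Field K] (C : CechTheory X K) {A B : Set X} (hA : IsClosed A) (hB : IsClosed B)
    (hUnion : A ∪ B = Set.univ) (hInt : interior A ∪ interior B = Set.univ)
    [LocallyConnectedSpace ↥A] [LocallyConnectedSpace ↥B]
    [LocallyConnectedSpace ↥(A ∩ B)]
    {φ : X → ℝ} (hφ : Continuous φ) {u v : ℝ} (huv : u < v)
    (hsz : ∀ v' > v, sizeFunOn (A ∩ B) φ u v' = sizeFunOn (A ∩ B) φ v v' ∧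
      sizeFunOn (A ∩ B) φ v v' ≤ 1) :
    LinearMap.ker (C.alphaAbs φ A B v) = ⊥ ∧
    LinearMap.ker (C.alphaRel φ A B u v) = ⊥ ∧
    (sizeFunOn Set.univ φ u v : ℤ) =
      (sizeFunOn A φ u v : ℤ) + (sizeFunOn B φ u v : ℤ)
        - (sizeFunOn (A ∩ B) φ u v : ℤ) :=
  alpha_injective_of_sizeFun_inter_general C hA hB hUnion hφ huv hsz
end
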